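/- arXiv:1502.07073 — 3 statements merged into one kernel-verified Lean document; each statement's English description precedes it below -/
import Mathlib

section
/- Let I = [q,s] be an interval in the geometric interval family 𝓘, and let I' = [s+1, s'] be a consecutive interval (its left endpoint is s+1) whose size satisfies |I'| = 2^j · |I| for some integer j ≤ 0. Then I' ∈ 𝓘. -/
/-!
An interval of `𝓘` is `[q, q + 2^k - 1]` with `q` a positive multiple of `2^k`. If the
consecutive interval has size `2^{-m}·2^k`, that size divides `2^k`, so it is a power `2^l`
with `l ≤ k`; then `2^l` divides both `q` and `2^k`, hence the new left endpoint `q + 2^k`.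
-/

/-- The geometric interval family `𝓘`: the interval `[q,s]` belongs to `𝓘` iff
`q = i·2^k` and `s = (i+1)·2^k − 1` for some `k ≥ 0` and `i ≥ 1`. -/
def IsGeo (q s : ℕ) : Prop :=
  ∃ k i : ℕ, 1 ≤ i ∧ q = i * 2 ^ k ∧ s = (i + 1) * 2 ^ k - 1

theorem isGeo_iff {q s : ℕ} : IsGeo q s ↔ 0 < q ∧ ∃ k, 2 ^ k ∣ q ∧ s + 1 = q + 2 ^ k := by
  constructor
  · rintro ⟨k, i, hi, rfl, rfl⟩
    have hpos : 0 < 2 ^ k := Nat.two_pow_pos k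
    refine ⟨Nat.mul_pos hi hpos, k, Dvd.intro_left i rfl, ?_⟩
    rw [add_mul, one_mul, Nat.sub_add_cancel (by nlinarith)]
  · rintro ⟨hq, k, ⟨i, rfl⟩, hs⟩
    refine ⟨k, i, Nat.pos_of_mul_pos_left hq, mul_comm _ _, ?_⟩
    rw [add_mul, one_mul, mul_comm]
    omega

/-- Let `[q,s] ∈ 𝓘` and let `[s+1, s']` be the consecutive interval whose size
satisfies `|[q,s]| = 2^m · |[s+1, s']|` for some `m ≥ 0` (i.e. `|[s+1,s']| = 2^j·|[q,s]|`
with `j = −m ≤ 0`). Then `[s+1, s'] ∈ 𝓘`. -/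
theorem right_interval_mem_geo (q s s' : ℕ) (h : IsGeo q s) (hle : s + 1 ≤ s')
    (hsize : ∃ m : ℕ, s - q + 1 = 2 ^ m * (s' - (s + 1) + 1)) :
    IsGeo (s + 1) s' := by
  obtain ⟨-, k, hkq, hs⟩ := isGeo_iff.1 h
  obtain ⟨m, hm⟩ := hsize
  have hsucc : s' - (s + 1) + 1 = s' - s := by omega
  have hsize_dvd : s' - s ∣ 2 ^ k := ⟨2 ^ m, by rw [mul_comm, ← hsucc, ← hm]; omega⟩
  obtain ⟨l, hlk, hl⟩ := (Nat.dvd_prime_pow Nat.prime_two).1 hsize_dvd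
  have hdvd : 2 ^ l ∣ 2 ^ k := pow_dvd_pow 2 hlk
  refine isGeo_iff.2 ⟨s.succ_pos, l, ?_, by omega⟩
  rw [hs]
  exact dvd_add (hdvd.trans hkq) hdvd
end

section
/- Under the pseudo-weight setup, for every interval I = [q,s] belonging to the geometric interval family 𝓘, the cumulative values satisfy Σ_{t=q}^{s} r_t(I) ≤ 5 · log₂(s + 1) · √|I|. -/
open scoped BigOperators

/-- The geometric interval family `𝓘`, as a set of pairs `(q, s)` representing the
integer interval `[q, s]`: `(q,s) ∈ 𝓘` iff `q = i·2^k` and `s = (i+1)·2^k − 1` for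
some `k ≥ 0` and `i ≥ 1`. -/
def geoSet : Set (ℕ × ℕ) :=
  {p | ∃ k i : ℕ, 1 ≤ i ∧ p.1 = i * 2 ^ k ∧ p.2 = (i + 1) * 2 ^ k - 1}

/-- `η_I = min{1/2, 1/√|I|}` for the interval `I = [q,s]` (of size `s − q + 1`). -/
noncomputable def eta (p : ℕ × ℕ) : ℝ :=
  min (1 / 2) (1 / Real.sqrt ((p.2 - p.1 + 1 : ℕ) : ℝ))

/-- The pseudo-weights `w̃_t(I)` for `I = [q,s]`, given instantaneous regrets `r`:
`w̃_t(I) = 0` for `t < q`; `w̃_q(I) = 1`;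
`w̃_t(I) = w̃_{t−1}(I)·(1 + η_I·r_{t−1}(I))` for `q < t ≤ s + 1`; and
`w̃_t(I) = w̃_{s+1}(I)` for `t > s + 1`.  (The indicator in the recursion below
makes the last two cases coincide, since `t − 1 ∈ I` exactly when `q < t ≤ s + 1`.) -/
noncomputable def wtilde (r : ℕ → ℕ × ℕ → ℝ) (p : ℕ × ℕ) : ℕ → ℝ
  | 0 => if p.1 = 0 then 1 else 0
  | (t + 1) =>
    if t + 1 < p.1 then 0
    else if t + 1 = p.1 then 1
    else wtilde r p t * (1 + eta p * (if p.1 ≤ t ∧ t ≤ p.2 then r t p else 0))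

/-- The weights `w_t(I) = η_I · w̃_t(I)` if `t ∈ I`, and `w_t(I) = 0` otherwise. -/
noncomputable def wfun (r : ℕ → ℕ × ℕ → ℝ) (p : ℕ × ℕ) (t : ℕ) : ℝ :=
  if p.1 ≤ t ∧ t ≤ p.2 then eta p * wtilde r p t else 0

/-!
The potential `Φ_t = Σ_I w̃_t(I)` over the geometric intervals started by time `t` grows from
`t` to `t + 1` by the number of intervals starting at `t + 1`: the recursion adds `w_t(I) r_t(I)`
to each pseudo-weight, and these increments cancel by the balance condition. At most `2M`
geometric intervals start by time `M`, so `w̃_{s+1}(I) ≤ 2(s + 1)`. On the other hand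
`w̃_{s+1}(I) = ∏_{t ∈ I} (1 + η r_t(I)) ≥ exp (η Σ_{t ∈ I} r_t(I) − 2η²|I|)`, and taking logarithms,
with `1/η ≤ 2√|I|`, gives the bound.
-/

open Finset

namespace Nat

theorem sum_range_div_two_pow_le (M n : ℕ) : ∑ k ∈ range n, M / 2 ^ k ≤ 2 * M := by
  induction n generalizing M with
  | zero => simp
  | succ n ih =>
    have hdiv : ∀ k, M / 2 ^ (k + 1) = M / 2 / 2 ^ k := fun k => by
      rw [Nat.div_div_eq_div_mul, pow_succ']
    rw [sum_range_succ', pow_zero, Nat.div_one]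
    simp only [hdiv]
    have := ih (M / 2)
    omega

end Nat

theorem geoSet_one_le_fst_le_snd {p : ℕ × ℕ} (hp : p ∈ geoSet) : 1 ≤ p.1 ∧ p.1 ≤ p.2 := by
  obtain ⟨k, i, hi, h1, h2⟩ := hp
  have hk : 1 ≤ 2 ^ k := Nat.one_le_two_pow
  have : 1 ≤ i * 2 ^ k := Nat.one_le_iff_ne_zero.mpr (by positivity)
  rw [h1, h2, add_one_mul]
  omega

def geoUpTo (M : ℕ) : Finset (ℕ × ℕ) :=
  (range (M + 1)).biUnion fun k =>
    (Icc 1 (M / 2 ^ k)).image fun i => (i * 2 ^ k, (i + 1) * 2 ^ k - 1)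

theorem mem_geoUpTo {M : ℕ} {p : ℕ × ℕ} : p ∈ geoUpTo M ↔ p ∈ geoSet ∧ p.1 ≤ M := by
  simp only [geoUpTo, mem_biUnion, mem_range, mem_image, mem_Icc, geoSet, Set.mem_ofPred_eq]
  constructor
  · rintro ⟨k, -, i, ⟨hi, hiM⟩, rfl⟩
    exact ⟨⟨k, i, hi, rfl, rfl⟩, (Nat.le_div_iff_mul_le (by positivity)).mp hiM⟩
  · rintro ⟨⟨k, i, hi, h1, h2⟩, hM⟩
    have hkM : k < M + 1 := by
      have := Nat.lt_two_pow_self (n := k)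
      have := Nat.le_mul_of_pos_left (2 ^ k) hi
      omega
    exact ⟨k, hkM, i, ⟨hi, (Nat.le_div_iff_mul_le (by positivity)).mpr (h1 ▸ hM)⟩,
      Prod.ext h1.symm h2.symm⟩

theorem card_geoUpTo_le (M : ℕ) : #(geoUpTo M) ≤ 2 * M :=
  calc #(geoUpTo M)
      ≤ ∑ k ∈ range (M + 1),
          #((Icc 1 (M / 2 ^ k)).image fun i => (i * 2 ^ k, (i + 1) * 2 ^ k - 1)) :=
        card_biUnion_le
    _ ≤ ∑ k ∈ range (M + 1), M / 2 ^ k :=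
        sum_le_sum fun k _ => card_image_le.trans (by simp)
    _ ≤ 2 * M := Nat.sum_range_div_two_pow_le M (M + 1)

theorem tsum_geoSet_eq_sum_geoUpTo {f : ℕ × ℕ → ℝ} {M : ℕ}
    (hf : ∀ p ∈ geoSet, M < p.1 → f p = 0) :
    ∑' p : geoSet, f p = ∑ p ∈ geoUpTo M, f p := by
  rw [_root_.tsum_subtype, tsum_eq_sum (s := geoUpTo M)]
  · exact sum_congr rfl fun p hp => Set.indicator_of_mem (mem_geoUpTo.mp hp).1 f
  · intro p hp
    by_cases hpI : p ∈ geoSet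
    · rw [Set.indicator_of_mem hpI, hf p hpI]
      by_contra hle
      exact hp (mem_geoUpTo.mpr ⟨hpI, not_lt.mp hle⟩)
    · exact Set.indicator_of_notMem hpI f

theorem eta_pos (p : ℕ × ℕ) : 0 < eta p :=
  lt_min (by norm_num) (one_div_pos.mpr (Real.sqrt_pos.mpr (by positivity)))

theorem eta_le_half (p : ℕ × ℕ) : eta p ≤ 1 / 2 := min_le_left _ _

section PseudoWeights

variable (r : ℕ → ℕ × ℕ → ℝ) {p : ℕ × ℕ} {t : ℕ}

theorem wtilde_of_lt_fst (ht : t < p.1) : wtilde r p t = 0 := by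
  cases t with
  | zero => simp only [wtilde]; exact if_neg ht.ne'
  | succ t => simp only [wtilde, if_pos ht]

theorem wtilde_fst : wtilde r p p.1 = 1 := by
  rcases h : p.1 with _ | t
  · simp only [wtilde, h, if_true]
  · simp only [wtilde, h, lt_irrefl, if_false, if_true]

theorem wtilde_succ_of_fst_le (ht : p.1 ≤ t) :
    wtilde r p (t + 1) = wtilde r p t * (1 + eta p * if p.1 ≤ t ∧ t ≤ p.2 then r t p else 0) := by
  simp only [wtilde, if_neg (show ¬t + 1 < p.1 by omega), if_neg (show t + 1 ≠ p.1 by omega)]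

theorem wfun_of_lt_fst (ht : t < p.1) : wfun r p t = 0 :=
  if_neg fun h => absurd h.1 (not_le.mpr ht)

theorem wtilde_succ (t : ℕ) :
    wtilde r p (t + 1) = wtilde r p t + (if p.1 = t + 1 then 1 else 0) + wfun r p t * r t p := by
  rcases lt_trichotomy (t + 1) p.1 with h | h | h
  · rw [wtilde_of_lt_fst r h, wtilde_of_lt_fst r (by omega), if_neg h.ne',
      wfun_of_lt_fst r (by omega)]
    ring
  · rw [h, wtilde_fst, ← h, wtilde_of_lt_fst r (by omega), wfun_of_lt_fst r (by omega),
      if_pos rfl]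
    ring
  · rw [wtilde_succ_of_fst_le r (by omega), if_neg h.ne, wfun]
    split_ifs <;> ring

theorem wtilde_eq_prod_Ico (h₁ : p.1 ≤ t) (h₂ : t ≤ p.2 + 1) :
    wtilde r p t = ∏ u ∈ Ico p.1 t, (1 + eta p * r u p) := by
  induction t, h₁ using Nat.le_induction with
  | base => rw [wtilde_fst, Ico_self, prod_empty]
  | succ t ht ih =>
    rw [wtilde_succ_of_fst_le r ht, ih (by omega), if_pos ⟨ht, by omega⟩,
      prod_Ico_succ_top ht]

theorem wtilde_nonneg (hr : ∀ t, -1 ≤ r t p) (t : ℕ) : 0 ≤ wtilde r p t := by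
  induction t with
  | zero => simp only [wtilde]; split_ifs <;> norm_num
  | succ t ih =>
    rcases lt_trichotomy (t + 1) p.1 with h | h | h
    · exact (wtilde_of_lt_fst r h).ge
    · rw [h, wtilde_fst]; exact zero_le_one
    · rw [wtilde_succ_of_fst_le r (by omega)]
      refine mul_nonneg ih ?_
      have := eta_pos p
      have := eta_le_half p
      split_ifs
      · nlinarith [hr t]
      · simp

theorem sum_wtilde_eq_card (G : Finset (ℕ × ℕ)) (M : ℕ) (hG : ∀ p ∈ G, 1 ≤ p.1 ∧ p.1 ≤ M)
    (hbal : ∀ t < M, ∑ p ∈ G, wfun r p t * r t p = 0) :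
    ∑ p ∈ G, wtilde r p M = #G := by
  have hstart : ∀ p ∈ G, ∑ t ∈ range M, (if p.1 = t + 1 then (1 : ℝ) else 0) = 1 := by
    intro p hp
    obtain ⟨h1, hM⟩ := hG p hp
    have : ∀ t, (p.1 = t + 1) ↔ (t = p.1 - 1) := fun t => by omega
    simp only [this, sum_ite_eq', mem_range, if_pos (show p.1 - 1 < M by omega)]
  calc ∑ p ∈ G, wtilde r p M
      = ∑ p ∈ G, ∑ t ∈ range M, (wtilde r p (t + 1) - wtilde r p t) := by
        refine sum_congr rfl fun p hp => ?_
        rw [sum_range_sub, wtilde_of_lt_fst r (hG p hp).1, sub_zero]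
    _ = ∑ p ∈ G, ∑ t ∈ range M, (if p.1 = t + 1 then (1 : ℝ) else 0)
        + ∑ t ∈ range M, ∑ p ∈ G, wfun r p t * r t p := by
        simp only [wtilde_succ, add_assoc, add_sub_cancel_left, sum_add_distrib]
        exact congrArg _ sum_comm
    _ = #G := by
        rw [sum_congr rfl hstart,
          sum_eq_zero fun t ht => hbal t (mem_range.mp ht)]
        simp

end PseudoWeights

theorem wtilde_le_two_mul_of_balanced (r : ℕ → ℕ × ℕ → ℝ)
    (hr : ∀ t, ∀ p ∈ geoSet, -1 ≤ r t p)
    (hbal : ∀ t : ℕ, 1 ≤ t → ∑' p : geoSet, wfun r (p : ℕ × ℕ) t * r t (p : ℕ × ℕ) = 0)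
    {p : ℕ × ℕ} (hp : p ∈ geoSet) {M : ℕ} (hpM : p.1 ≤ M) :
    wtilde r p M ≤ 2 * M := by
  have hG : ∀ p' ∈ geoUpTo M, 1 ≤ p'.1 ∧ p'.1 ≤ M := fun p' hp' =>
    ⟨(geoSet_one_le_fst_le_snd (mem_geoUpTo.mp hp').1).1, (mem_geoUpTo.mp hp').2⟩
  have hbalG : ∀ t < M, ∑ p' ∈ geoUpTo M, wfun r p' t * r t p' = 0 := by
    intro t ht
    rcases Nat.eq_zero_or_pos t with rfl | ht0
    · exact sum_eq_zero fun p' hp' => by rw [wfun_of_lt_fst r (hG p' hp').1, zero_mul]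
    · rw [← tsum_geoSet_eq_sum_geoUpTo fun p' _ hp' => by
        rw [wfun_of_lt_fst r (by omega), zero_mul]]
      exact hbal t ht0
  calc wtilde r p M
      ≤ ∑ p' ∈ geoUpTo M, wtilde r p' M :=
        single_le_sum
          (fun p' hp' => wtilde_nonneg r (fun t => hr t p' (mem_geoUpTo.mp hp').1) M)
          (mem_geoUpTo.mpr ⟨hp, hpM⟩)
    _ = #(geoUpTo M) := sum_wtilde_eq_card r _ M hG hbalG
    _ ≤ 2 * M := by exact_mod_cast card_geoUpTo_le M

theorem Real.sub_two_mul_sq_le_log_one_add {x : ℝ} (hx : -(1 / 2) ≤ x) :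
    x - 2 * x ^ 2 ≤ Real.log (1 + x) := by
  have hpos : 0 < 1 + x := by linarith
  have h := Real.one_sub_inv_le_log_of_pos hpos
  have : x - 2 * x ^ 2 ≤ 1 - (1 + x)⁻¹ := by
    rw [← sub_nonneg]
    have key : 1 - (1 + x)⁻¹ - (x - 2 * x ^ 2) = x ^ 2 * (1 + 2 * x) / (1 + x) := by
      field_simp
      ring
    rw [key]
    have : 0 ≤ 1 + 2 * x := by linarith
    positivity
  linarith

theorem exp_mul_sum_sub_le_prod_one_add {ι : Type*} (s : Finset ι) {η : ℝ} (hη₀ : 0 ≤ η)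
    (hη : η ≤ 1 / 2) {x : ι → ℝ} (hx : ∀ i ∈ s, |x i| ≤ 1) :
    Real.exp (η * ∑ i ∈ s, x i - 2 * η ^ 2 * #s) ≤ ∏ i ∈ s, (1 + η * x i) := by
  have hηx : ∀ i ∈ s, -(1 / 2) ≤ η * x i := fun i hi => by
    nlinarith [neg_le_of_abs_le (hx i hi)]
  have hconst : 2 * η ^ 2 * #s = ∑ _i ∈ s, 2 * η ^ 2 := by
    rw [sum_const, nsmul_eq_mul]; ring
  rw [← Real.le_log_iff_exp_le (prod_pos fun i hi => by linarith [hηx i hi]),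
    Real.log_prod fun i hi => by linarith [hηx i hi], mul_sum, hconst,
    ← sum_sub_distrib]
  refine sum_le_sum fun i hi =>
    le_trans ?_ (Real.sub_two_mul_sq_le_log_one_add (hηx i hi))
  have : (η * x i) ^ 2 ≤ η ^ 2 := by
    rw [mul_pow, ← sq_abs (x i)]
    exact mul_le_of_le_one_right (sq_nonneg η) (pow_le_one₀ (abs_nonneg _) (hx i hi))
  linarith

-- `1 / η ≤ 2√n` and `η n ≤ √n`, so dividing by `η` costs a factor `2√n`.
theorem le_two_mul_sqrt_mul_of_eta_mul_sub_le {p : ℕ × ℕ} {S B : ℝ} (hB : 0 ≤ B)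
    (h : eta p * S - 2 * eta p ^ 2 * ((p.2 - p.1 + 1 : ℕ) : ℝ) ≤ B) :
    S ≤ 2 * Real.sqrt ((p.2 - p.1 + 1 : ℕ) : ℝ) * (B + 1) := by
  set n : ℝ := ((p.2 - p.1 + 1 : ℕ) : ℝ)
  set a := Real.sqrt n
  have hn : 1 ≤ n := by simp [n]
  have ha : 1 ≤ a := Real.one_le_sqrt.mpr hn
  have hna : n = a ^ 2 := (Real.sq_sqrt (by linarith)).symm
  have hη := eta_pos p
  have hηa : eta p * a ≤ 1 := by
    have : eta p ≤ 1 / a := min_le_right _ _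
    rwa [le_div_iff₀ (by linarith)] at this
  have h2ηa : 1 ≤ eta p * (2 * a) := by
    have : 1 / (2 * a) ≤ eta p :=
      le_min (by rw [div_le_div_iff₀ (by positivity) (by norm_num)]; linarith)
        (by rw [div_le_div_iff₀ (by positivity) (by positivity)]; linarith)
    rwa [div_le_iff₀ (by positivity)] at this
  rw [hna] at h
  refine le_of_mul_le_mul_left ?_ hη
  nlinarith [mul_le_mul_of_nonneg_right h2ηa hB,
    mul_le_mul_of_nonneg_left hηa (by positivity : 0 ≤ 2 * eta p * a)]

theorem two_mul_log_two_mul_add_one_le {x : ℝ} (hx : 2 ≤ x) :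
    2 * (Real.log (2 * x) + 1) ≤ 5 * Real.logb 2 x := by
  have hl2 : 0 < Real.log 2 := Real.log_pos (by norm_num)
  have hL : 1 ≤ Real.logb 2 x :=
    (Real.le_logb_iff_rpow_le (by norm_num) (by linarith)).mpr (by simpa using hx)
  have hlog : Real.log (2 * x) = Real.log 2 * (1 + Real.logb 2 x) := by
    rw [Real.log_mul (by norm_num) (by linarith), Real.logb, mul_add, mul_div_cancel₀ _ hl2.ne']
    ring
  rw [hlog]
  nlinarith [Real.log_two_lt_d9]

/-- Under the pseudo-weight setup (with `r_t(I) ∈ [−1,1]` and the balance condition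
`Σ_{I ∈ 𝓘} w_t(I)·r_t(I) = 0`), for every interval `I = [q,s] ∈ 𝓘` we have
`Σ_{t=q}^{s} r_t(I) ≤ 5·log₂(s+1)·√|I|`. -/
theorem cumulative_regret_bound_on_geo_interval (r : ℕ → ℕ × ℕ → ℝ)
    (hr : ∀ (t : ℕ) (p : ℕ × ℕ), p ∈ geoSet → -1 ≤ r t p ∧ r t p ≤ 1)
    (hbal : ∀ t : ℕ, 1 ≤ t → ∑' p : geoSet, wfun r (p : ℕ × ℕ) t * r t (p : ℕ × ℕ) = 0)
    (q s : ℕ) (hI : (q, s) ∈ geoSet) :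
    ∑ t ∈ Finset.Icc q s, r t (q, s) ≤
      5 * Real.logb 2 ((s : ℝ) + 1) * Real.sqrt ((s - q + 1 : ℕ) : ℝ) := by
  obtain ⟨hq, hqs⟩ := geoSet_one_le_fst_le_snd hI
  have hmass : wtilde r (q, s) (s + 1) ≤ 2 * ((s : ℝ) + 1) := by
    exact_mod_cast wtilde_le_two_mul_of_balanced r (fun t p hp => (hr t p hp).1) hbal hI
      (M := s + 1) (show q ≤ s + 1 by omega)
  have hlog : eta (q, s) * ∑ t ∈ Finset.Icc q s, r t (q, s)
      - 2 * eta (q, s) ^ 2 * ((s - q + 1 : ℕ) : ℝ) ≤ Real.log (2 * ((s : ℝ) + 1)) := by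
    have hcard : #(Finset.Icc q s) = s - q + 1 := by rw [Nat.card_Icc]; omega
    rw [Real.le_log_iff_exp_le (by positivity)]
    refine le_trans ?_ hmass
    rw [wtilde_eq_prod_Ico r (show q ≤ s + 1 by omega) le_rfl, Ico_add_one_right_eq_Icc,
      ← hcard]
    exact exp_mul_sum_sub_le_prod_one_add _ (eta_pos _).le (eta_le_half _)
      fun t _ => abs_le.mpr (hr t _ hI)
  calc ∑ t ∈ Finset.Icc q s, r t (q, s)
      ≤ 2 * Real.sqrt ((s - q + 1 : ℕ) : ℝ) * (Real.log (2 * ((s : ℝ) + 1)) + 1) :=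
        le_two_mul_sqrt_mul_of_eta_mul_sub_le (Real.log_nonneg (by linarith)) hlog
    _ ≤ 5 * Real.logb 2 ((s : ℝ) + 1) * Real.sqrt ((s - q + 1 : ℕ) : ℝ) := by
        have := two_mul_log_two_mul_add_one_le (x := (s : ℝ) + 1) (by norm_cast; omega)
        nlinarith [Real.sqrt_nonneg ((s - q + 1 : ℕ) : ℝ)]
end

section
/- Let α ∈ (0,1) and C > 0, and let R be a real-valued function on intervals [q,s] of positive natural numbers such that: (i) (partition subadditivity) whenever an interval I is partitioned into pairwise disjoint consecutive intervals I_1, …, I_n whose union is I, R(I) ≤ Σ_{j=1}^{n} R(I_j); and (ii) for every interval I = [q,s] belonging to the geometric interval family 𝓘, R(I) ≤ C·|I|^α + 5·log₂(s+1)·√|I|. Then for every interval I = [q,s] of positive natural numbers, R(I) ≤ (4/(2^α − 1))·C·|I|^α + 40·log₂(s+1)·√|I|. -/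
open scoped BigOperators

open Finset

theorem isGeo_of_two_pow_dvd {q k : ℕ} (hq : 1 ≤ q) (hdvd : 2 ^ k ∣ q) :
    IsGeo q (q + 2 ^ k - 1) := by
  obtain ⟨i, rfl⟩ := hdvd
  have hi : 1 ≤ i := Nat.pos_of_ne_zero fun h => by simp [h] at hq
  exact ⟨k, i, hi, mul_comm _ _, by rw [add_mul, one_mul, mul_comm]⟩

theorem two_pow_succ_dvd_add_two_pow {q v : ℕ} (hdvd : 2 ^ v ∣ q) (hndvd : ¬ 2 ^ (v + 1) ∣ q) :
    2 ^ (v + 1) ∣ q + 2 ^ v := by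
  obtain ⟨u, rfl⟩ := hdvd
  have hodd : ¬ 2 ∣ u := fun h => hndvd (by rw [pow_succ]; exact mul_dvd_mul_left _ h)
  rw [pow_succ, ← mul_add_one]
  exact mul_dvd_mul_left _ (by omega)

theorem natCast_two_pow_rpow (β : ℝ) (k : ℕ) :
    ((2 ^ k : ℕ) : ℝ) ^ β = ((2 : ℝ) ^ β) ^ k := by
  push_cast
  exact (Real.rpow_pow_comm (by norm_num) β k).symm

theorem sqrt_natCast_two_pow (k : ℕ) : √((2 ^ k : ℕ) : ℝ) = √2 ^ k := by
  rw [Real.sqrt_eq_rpow, Real.sqrt_eq_rpow, natCast_two_pow_rpow]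

theorem geom_sum_range_succ_le {r B : ℝ} (hr : 1 < r) {J : ℕ} (hB : r ^ J ≤ B) :
    ∑ k ∈ range (J + 1), r ^ k ≤ r * B / (r - 1) := by
  have hr1 : 0 < r - 1 := by linarith
  rw [geom_sum_eq hr.ne', div_le_div_iff_of_pos_right hr1, pow_succ']
  nlinarith

theorem geom_sum_two_rpow_le {α N : ℝ} (hα0 : 0 < α) (hα1 : α ≤ 1) {J : ℕ}
    (hJ : ((2 ^ J : ℕ) : ℝ) ≤ N) :
    ∑ k ∈ range (J + 1), ((2 : ℝ) ^ α) ^ k ≤ 2 * N ^ α / ((2 : ℝ) ^ α - 1) := by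
  have hx : 1 < (2 : ℝ) ^ α := Real.one_lt_rpow one_lt_two hα0
  have hx2 : (2 : ℝ) ^ α ≤ 2 := by simpa using Real.rpow_le_rpow_of_exponent_le one_le_two hα1
  have hN : 0 ≤ N := le_trans (Nat.cast_nonneg _) hJ
  refine (geom_sum_range_succ_le hx ?_).trans (by gcongr)
  rw [← natCast_two_pow_rpow]
  gcongr

theorem geom_sum_sqrt_two_le {N : ℝ} {J : ℕ} (hJ : ((2 ^ J : ℕ) : ℝ) ≤ N) :
    ∑ k ∈ range (J + 1), √2 ^ k ≤ 4 * √N := by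
  have h2 : √2 ^ 2 = 2 := Real.sq_sqrt zero_le_two
  have hy : 1 < √2 := by nlinarith [Real.sqrt_nonneg 2]
  refine (geom_sum_range_succ_le hy (B := √N) ?_).trans ?_
  · rw [← sqrt_natCast_two_pow]
    gcongr
  · rw [div_le_iff₀ (by linarith)]
    nlinarith [Real.sqrt_nonneg N, Real.sqrt_nonneg 2]

theorem le_sum_range_of_two_pow_dvd {R : ℕ × ℕ → ℝ} {w : ℕ → ℝ} {S : ℕ}
    (hsplit : ∀ q m s, 1 ≤ q → q ≤ m → m < s → R (q, s) ≤ R (q, m) + R (m + 1, s))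
    (hblock : ∀ q k, 1 ≤ q → 2 ^ k ∣ q → q + 2 ^ k - 1 ≤ S → R (q, q + 2 ^ k - 1) ≤ w k)
    (hw : ∀ k, 0 ≤ w k) (J : ℕ) {q s : ℕ} (hq : 1 ≤ q) (hqs : q ≤ s) (hsS : s ≤ S)
    (hdvd : 2 ^ J ∣ q) (hlt : s + 1 < q + 2 ^ (J + 1)) :
    R (q, s) ≤ ∑ k ∈ range (J + 1), w k := by
  induction J generalizing q s with
  | zero =>
    obtain rfl : q = s := by omega
    simpa using hblock q 0 hq (one_dvd q) (by simpa using hsS)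
  | succ J ih =>
    have hdvd' : 2 ^ J ∣ q := (pow_dvd_pow 2 J.le_succ).trans hdvd
    have hsum := sum_range_succ w (J + 1)
    have hsum_nonneg : 0 ≤ ∑ k ∈ range (J + 1), w k := sum_nonneg fun k _ => hw k
    rcases lt_trichotomy (s + 1) (q + 2 ^ (J + 1)) with hshort | hexact | hlong
    · linarith [ih hq hqs hsS hdvd' hshort, hw (J + 1)]
    · obtain rfl : s = q + 2 ^ (J + 1) - 1 := by omega
      linarith [hblock q (J + 1) hq hdvd hsS]
    · set m := q + 2 ^ (J + 1) - 1
      have hm : m + 1 = q + 2 ^ (J + 1) := by omega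
      have hdvd_m : 2 ^ J ∣ m + 1 := hm ▸ dvd_add hdvd' (pow_dvd_pow 2 J.le_succ)
      linarith [hsplit q m s hq (by omega) (by omega), hblock q (J + 1) hq hdvd (by omega),
        ih (by omega) (by omega) hsS hdvd_m (by omega)]

theorem le_sum_range_add_sum_Ico {R : ℕ × ℕ → ℝ} {w : ℕ → ℝ} {S : ℕ}
    (hsplit : ∀ q m s, 1 ≤ q → q ≤ m → m < s → R (q, s) ≤ R (q, m) + R (m + 1, s))
    (hblock : ∀ q k, 1 ≤ q → 2 ^ k ∣ q → q + 2 ^ k - 1 ≤ S → R (q, q + 2 ^ k - 1) ≤ w k)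
    (hw : ∀ k, 0 ≤ w k) (J v : ℕ) {q s : ℕ} (hq : 1 ≤ q) (hqs : q ≤ s) (hsS : s ≤ S)
    (hdvd : 2 ^ v ∣ q) (hlt : s + 1 < q + 2 ^ (J + 1)) :
    R (q, s) ≤ ∑ k ∈ range (J + 1), w k + ∑ k ∈ Ico v J, w k := by
  induction hd : J - v generalizing v q s with
  | zero =>
    rw [Ico_eq_empty_of_le (by omega), sum_empty, add_zero]
    exact le_sum_range_of_two_pow_dvd hsplit hblock hw J hq hqs hsS
      ((pow_dvd_pow 2 (by omega)).trans hdvd) hlt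
  | succ d ih =>
    have hvJ : v < J := by omega
    have hIco := sum_eq_sum_Ico_succ_bot hvJ w
    have hIco_nonneg : 0 ≤ ∑ k ∈ Ico (v + 1) J, w k := sum_nonneg fun k _ => hw k
    by_cases hdvd' : 2 ^ (v + 1) ∣ q
    · linarith [ih (v + 1) hq hqs hsS hdvd' hlt (by omega), hw v]
    rcases lt_or_ge (s + 1) (q + 2 ^ (v + 1)) with hshort | hlong
    · have hrange : ∑ k ∈ range (v + 1), w k ≤ ∑ k ∈ range (J + 1), w k :=
        sum_le_sum_of_subset_of_nonneg (range_subset_range.mpr (by omega)) fun k _ _ => hw k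
      linarith [le_sum_range_of_two_pow_dvd hsplit hblock hw v hq hqs hsS hdvd hshort, hw v]
    · -- `q / 2 ^ v` is odd, so cutting off a block of size `2 ^ v` doubles the alignment.
      set m := q + 2 ^ v - 1
      have hm : m + 1 = q + 2 ^ v := by omega
      have hdvd_m : 2 ^ (v + 1) ∣ m + 1 := hm ▸ two_pow_succ_dvd_add_two_pow hdvd hdvd'
      linarith [hsplit q m s hq (by omega) (by omega), hblock q v hq hdvd (by omega),
        ih (v + 1) (by omega) (by omega) hsS hdvd_m (by omega) (by omega)]

theorem le_two_mul_sum_range {R : ℕ × ℕ → ℝ} {w : ℕ → ℝ} {S : ℕ}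
    (hsplit : ∀ q m s, 1 ≤ q → q ≤ m → m < s → R (q, s) ≤ R (q, m) + R (m + 1, s))
    (hblock : ∀ q k, 1 ≤ q → 2 ^ k ∣ q → q + 2 ^ k - 1 ≤ S → R (q, q + 2 ^ k - 1) ≤ w k)
    (hw : ∀ k, 0 ≤ w k) {J q s : ℕ} (hq : 1 ≤ q) (hqs : q ≤ s) (hsS : s ≤ S)
    (hlt : s + 1 < q + 2 ^ (J + 1)) :
    R (q, s) ≤ 2 * ∑ k ∈ range (J + 1), w k := by
  have hIco : ∑ k ∈ Ico 0 J, w k ≤ ∑ k ∈ range (J + 1), w k := by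
    rw [← range_eq_Ico]
    exact sum_le_sum_of_subset_of_nonneg (range_subset_range.mpr J.le_succ) fun k _ _ => hw k
  linarith [le_sum_range_add_sum_Ico hsplit hblock hw J 0 hq hqs hsS (one_dvd q) hlt]

theorem regret_split {R : ℕ × ℕ → ℝ}
    (hsub : ∀ (n : ℕ) (e : ℕ → ℕ × ℕ) (q s : ℕ), 0 < n → 1 ≤ q →
      (e 0).1 = q → (e (n - 1)).2 = s →
      (∀ i, i + 1 < n → (e (i + 1)).1 = (e i).2 + 1) →
      (∀ i, i < n → (e i).1 ≤ (e i).2) →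
      R (q, s) ≤ ∑ i ∈ range n, R (e i))
    (q m s : ℕ) (hq : 1 ≤ q) (hqm : q ≤ m) (hms : m < s) :
    R (q, s) ≤ R (q, m) + R (m + 1, s) := by
  simpa [sum_range_succ] using
    hsub 2 (fun i => if i = 0 then (q, m) else (m + 1, s)) q s two_pos hq rfl rfl
      (fun i hi => by obtain rfl : i = 0 := (by omega); simp)
      (fun i hi => by interval_cases i <;> simp <;> omega)

theorem regret_block_le {α C : ℝ} {R : ℕ × ℕ → ℝ}
    (hgeo : ∀ q s : ℕ, IsGeo q s →
      R (q, s) ≤ C * ((s - q + 1 : ℕ) : ℝ) ^ α +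
        5 * Real.logb 2 ((s : ℝ) + 1) * Real.sqrt ((s - q + 1 : ℕ) : ℝ))
    {S q k : ℕ} (hq : 1 ≤ q) (hdvd : 2 ^ k ∣ q) (hS : q + 2 ^ k - 1 ≤ S) :
    R (q, q + 2 ^ k - 1) ≤ C * ((2 : ℝ) ^ α) ^ k + 5 * Real.logb 2 ((S : ℝ) + 1) * √2 ^ k := by
  have hlen : q + 2 ^ k - 1 - q + 1 = 2 ^ k := by have := k.one_le_two_pow; omega
  have hlog : Real.logb 2 (((q + 2 ^ k - 1 : ℕ) : ℝ) + 1) ≤ Real.logb 2 ((S : ℝ) + 1) :=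
    Real.logb_le_logb_of_le one_lt_two (by positivity) (by gcongr)
  have := hgeo _ _ (isGeo_of_two_pow_dvd hq hdvd)
  rw [hlen, natCast_two_pow_rpow, sqrt_natCast_two_pow] at this
  nlinarith [pow_nonneg (Real.sqrt_nonneg 2) k]

/-- Abstract form of Theorem 1 (regret bound of SAOL on arbitrary intervals).
Let `α ∈ (0,1)`, `C > 0`, and let `R` be a real-valued function on intervals `[q,s]`
of positive naturals (represented as pairs `(q,s)`) such that:
(i) `R` is subadditive under partitions of an interval into pairwise disjoint
consecutive intervals, and
(ii) `R([q,s]) ≤ C·|I|^α + 5·log₂(s+1)·√|I|` for every `[q,s] ∈ 𝓘`.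
Then for every interval `[q,s]` of positive naturals,
`R([q,s]) ≤ (4/(2^α − 1))·C·|I|^α + 40·log₂(s+1)·√|I|`. -/
theorem saol_regret_bound (α C : ℝ) (hα : 0 < α ∧ α < 1) (hC : 0 < C)
    (R : ℕ × ℕ → ℝ)
    (hsub : ∀ (n : ℕ) (e : ℕ → ℕ × ℕ) (q s : ℕ), 0 < n → 1 ≤ q →
      (e 0).1 = q → (e (n - 1)).2 = s →
      (∀ i, i + 1 < n → (e (i + 1)).1 = (e i).2 + 1) →
      (∀ i, i < n → (e i).1 ≤ (e i).2) →
      R (q, s) ≤ ∑ i ∈ Finset.range n, R (e i))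
    (hgeo : ∀ q s : ℕ, IsGeo q s →
      R (q, s) ≤ C * ((s - q + 1 : ℕ) : ℝ) ^ α +
        5 * Real.logb 2 ((s : ℝ) + 1) * Real.sqrt ((s - q + 1 : ℕ) : ℝ))
    (q s : ℕ) (hq : 1 ≤ q) (hqs : q ≤ s) :
    R (q, s) ≤ (4 / ((2 : ℝ) ^ α - 1)) * C * ((s - q + 1 : ℕ) : ℝ) ^ α +
      40 * Real.logb 2 ((s : ℝ) + 1) * Real.sqrt ((s - q + 1 : ℕ) : ℝ) := by
  obtain ⟨hα0, hα1⟩ := hα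
  obtain ⟨J, hJlo, hJhi⟩ : ∃ J, 2 ^ J ≤ s - q + 1 ∧ s - q + 1 < 2 ^ (J + 1) :=
    ⟨_, Nat.pow_log_le_self 2 (by omega), Nat.lt_pow_succ_log_self one_lt_two _⟩
  have hJ : ((2 ^ J : ℕ) : ℝ) ≤ ((s - q + 1 : ℕ) : ℝ) := Nat.cast_le.mpr hJlo
  set L := Real.logb 2 ((s : ℝ) + 1)
  have hL : 0 ≤ L := Real.logb_nonneg one_lt_two (by linarith [s.cast_nonneg (α := ℝ)])
  calc R (q, s) ≤ 2 * ∑ k ∈ range (J + 1), (C * ((2 : ℝ) ^ α) ^ k + 5 * L * √2 ^ k) :=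
        le_two_mul_sum_range (regret_split hsub) (fun _ _ => regret_block_le hgeo)
          (fun k => by positivity) hq hqs le_rfl (by omega)
    _ = 2 * C * ∑ k ∈ range (J + 1), ((2 : ℝ) ^ α) ^ k +
        10 * L * ∑ k ∈ range (J + 1), √2 ^ k := by
      rw [sum_add_distrib, ← mul_sum, ← mul_sum]
      ring
    _ ≤ 2 * C * (2 * ((s - q + 1 : ℕ) : ℝ) ^ α / ((2 : ℝ) ^ α - 1)) +
        10 * L * (4 * √((s - q + 1 : ℕ) : ℝ)) := by
      gcongr
      exacts [geom_sum_two_rpow_le hα0 hα1.le hJ, geom_sum_sqrt_two_le hJ]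
    _ = _ := by ring
end
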